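/- Let K ≥ 1, let δ : subsets of {1,…,K} → [0,1) be symmetric (δ_A depends only on |A|) and monotone in the sense δ_{A} ≥ δ_{B} whenever A ⊇ B. Given positive reals μ_{{1}} ≥ μ_{{2}} ≥ … ≥ μ_{{K}} and the recursive definition μ_J := max_{k ∈ J} Σ_{I : k ∈ I ⊊ J} [φ_{(J̄∪{k}), (J∖I)} / (1 - δ_{J̄∪{k}})] · μ_I for |J| ≥ 2 (where φ_{F,T} := Σ_{U⊆T} (-1)^{|U|} δ_{F∪U} is assumed nonnegative), the maximum is attained at k = min J; that is, μ_J = Σ_{I : k*_J ∈ I ⊊ J} [φ_{(J̄∪{k*_J}), (J∖I)} / (1 - δ_{J̄∪{k*_J}})] · μ_I with k*_J = min J. Moreover if J₁, J₂ have equal cardinality, J₁∖{min J₁} = J₂∖{min J₂}, and min J₁ ≤ min J₂, then μ_{J₁} ≥ μ_{J₂}. -/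

import Mathlib

/-!
Since `δ`, and hence `φ`, only sees cardinalities, the recursion for `μ` is invariant under
permutations of the users, and its coefficients `φ / (1 - δ)` are nonnegative. Hence, if `μ {b} ≤ μ {a}`, applying the transposition `(a b)` to a set that
contains `b` but not `a` can only increase `μ`: by strong induction on the set, each candidate
in the maximum defining `μ S` is dominated, term by term, by the transported candidate for
`(a b) • S`. Applied with `a = min J` inside `J`, this shows that the candidate at `min J`
dominates all others; applied to `J₂` and `J₁ = (min J₁ min J₂) • J₂` it gives the
monotonicity statement.
-/

open Finset Pointwise Equiv

namespace Finset

variable {α : Type*} [DecidableEq α]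

lemma mem_swap_smul_finset {a b x : α} {s : Finset α} : x ∈ swap a b • s ↔ swap a b x ∈ s := by
  rw [← inv_smul_mem_iff, Perm.smul_def, swap_inv]

lemma swap_smul_finset_eq_self {a b : α} {s : Finset α} (h : a ∈ s ↔ b ∈ s) :
    swap a b • s = s := by
  ext x
  rw [mem_swap_smul_finset, swap_apply_def]
  split_ifs <;> grind

lemma swap_smul_finset_of_notMem_of_mem {a b : α} {s : Finset α} (ha : a ∉ s) (hb : b ∈ s) :
    swap a b • s = insert a (s.erase b) := by
  ext x
  rw [mem_swap_smul_finset, swap_apply_def]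
  split_ifs <;> grind

lemma eq_swap_smul_finset_of_erase_eq {a b : α} {s t : Finset α} (ha : a ∈ s) (hb : b ∈ t)
    (h : s.erase a = t.erase b) : s = swap a b • t := by
  obtain rfl | hab := eq_or_ne a b
  · rw [swap_self, ← Perm.one_def, one_smul, ← insert_erase ha, h, insert_erase hb]
  have hat : a ∉ t := fun hat => notMem_erase a s (h ▸ mem_erase.2 ⟨hab, hat⟩)
  rw [swap_smul_finset_of_notMem_of_mem hat hb, ← h, insert_erase ha]

lemma smul_finset_compl [Fintype α] (σ : Perm α) (s : Finset α) : σ • sᶜ = (σ • s)ᶜ := by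
  simp only [compl_eq_univ_sdiff, smul_finset_sdiff, smul_finset_univ]

end Finset

section Recursion

variable {α : Type*} [DecidableEq α] {δ : Finset α → ℝ} {φ : Finset α → Finset α → ℝ}

/-- The expression maximised over `k ∈ J` in the recursive definition of `μ J`. -/
noncomputable def recursionTerm [Fintype α] (δ : Finset α → ℝ) (φ : Finset α → Finset α → ℝ)
    (μ : Finset α → ℝ) (J : Finset α) (k : α) : ℝ :=
  ∑ I ∈ J.powerset.filter (fun I => k ∈ I ∧ I ≠ J),
    φ (Jᶜ ∪ {k}) (J \ I) / (1 - δ (Jᶜ ∪ {k})) * μ I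

lemma phi_smul (hsym : ∀ A B : Finset α, A.card = B.card → δ A = δ B)
    (hφdef : ∀ F T : Finset α, φ F T = ∑ U ∈ T.powerset, (-1 : ℝ) ^ U.card * δ (F ∪ U))
    (σ : Perm α) (F T : Finset α) : φ (σ • F) (σ • T) = φ F T := by
  rw [hφdef, hφdef]
  refine (sum_equiv (MulAction.toPerm σ) (fun U => ?_) fun U _ => ?_).symm
  · simp only [mem_powerset, MulAction.toPerm_apply, smul_finset_subset_smul_finset_iff]
  · rw [MulAction.toPerm_apply, card_smul_finset, ← smul_finset_union,
      hsym _ _ (card_smul_finset σ _)]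

lemma recursionTerm_smul [Fintype α] (hsym : ∀ A B : Finset α, A.card = B.card → δ A = δ B)
    (hφdef : ∀ F T : Finset α, φ F T = ∑ U ∈ T.powerset, (-1 : ℝ) ^ U.card * δ (F ∪ U))
    (μ : Finset α → ℝ) (σ : Perm α) (J : Finset α) (k : α) :
    recursionTerm δ φ μ (σ • J) (σ • k) = recursionTerm δ φ (fun I => μ (σ • I)) J k := by
  refine (sum_equiv (MulAction.toPerm σ) (fun I => ?_) fun I _ => ?_).symm
  · simp only [mem_filter, mem_powerset, MulAction.toPerm_apply, ne_eq,
      smul_finset_subset_smul_finset_iff, smul_mem_smul_finset_iff, smul_left_cancel_iff]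
  · rw [MulAction.toPerm_apply, ← smul_finset_sdiff, ← smul_finset_compl,
      ← smul_finset_singleton, ← smul_finset_union, phi_smul hsym hφdef,
      hsym _ _ (card_smul_finset σ _)]

lemma recursionTerm_mono [Fintype α] (hδ1 : ∀ A, δ A < 1)
    (hφpos : ∀ F T : Finset α, Disjoint F T → 0 ≤ φ F T) {μ ν : Finset α → ℝ} {J : Finset α}
    {k : α} (h : ∀ I ⊆ J, k ∈ I → I ≠ J → μ I ≤ ν I) :
    recursionTerm δ φ μ J k ≤ recursionTerm δ φ ν J k := by
  refine sum_le_sum fun I hI => ?_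
  obtain ⟨hIJ, hkI, hIJ'⟩ := by simpa only [mem_filter, mem_powerset] using hI
  have hdisj : Disjoint (Jᶜ ∪ {k}) (J \ I) := by
    rw [disjoint_union_left, disjoint_singleton_left, mem_sdiff, not_and_not_right]
    exact ⟨disjoint_compl_left.mono_right sdiff_subset, fun _ => hkI⟩
  exact mul_le_mul_of_nonneg_left (h I hIJ hkI hIJ')
    (div_nonneg (hφpos _ _ hdisj) (sub_nonneg.2 (hδ1 _).le))

variable [Fintype α] {μ : Finset α → ℝ}

lemma le_swap_smul (hsym : ∀ A B : Finset α, A.card = B.card → δ A = δ B)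
    (hφdef : ∀ F T : Finset α, φ F T = ∑ U ∈ T.powerset, (-1 : ℝ) ^ U.card * δ (F ∪ U))
    (hδ1 : ∀ A, δ A < 1) (hφpos : ∀ F T : Finset α, Disjoint F T → 0 ≤ φ F T)
    (hμrec : ∀ (J : Finset α) (hJ : 2 ≤ J.card),
      μ J = J.sup' (card_pos.mp (by omega)) (recursionTerm δ φ μ J))
    {a b : α} (hab : μ {b} ≤ μ {a}) (S : Finset α) (hS : a ∈ S → b ∈ S) :
    μ S ≤ μ (swap a b • S) := by
  induction S using Finset.strongInduction with
  | H S ih =>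
  by_cases hfix : a ∈ S ↔ b ∈ S
  · rw [swap_smul_finset_eq_self hfix]
  obtain ⟨haS, hbS⟩ : a ∉ S ∧ b ∈ S := by tauto
  obtain hS1 | hS2 : S.card = 1 ∨ 2 ≤ S.card := by
    have := card_pos.2 ⟨b, hbS⟩
    omega
  · obtain ⟨c, rfl⟩ := card_eq_one.1 hS1
    obtain rfl := mem_singleton.1 hbS
    rwa [smul_finset_singleton, Perm.smul_def, swap_apply_right]
  rw [hμrec S hS2]
  refine sup'_le _ _ fun j hj => ?_
  have hS2' : 2 ≤ (swap a b • S).card := by rwa [card_smul_finset]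
  calc recursionTerm δ φ μ S j
      ≤ recursionTerm δ φ (fun I => μ (swap a b • I)) S j :=
        recursionTerm_mono hδ1 hφpos fun I hIS _ hIS' =>
          ih I (ssubset_of_subset_of_ne hIS hIS') fun haI => absurd (hIS haI) haS
    _ = recursionTerm δ φ μ (swap a b • S) (swap a b • j) :=
        (recursionTerm_smul hsym hφdef μ _ S j).symm
    _ ≤ μ (swap a b • S) := by
        rw [hμrec _ hS2']
        exact le_sup' _ (smul_mem_smul_finset hj)

lemma recursionTerm_le_of_singleton_le
    (hsym : ∀ A B : Finset α, A.card = B.card → δ A = δ B)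
    (hφdef : ∀ F T : Finset α, φ F T = ∑ U ∈ T.powerset, (-1 : ℝ) ^ U.card * δ (F ∪ U))
    (hδ1 : ∀ A, δ A < 1) (hφpos : ∀ F T : Finset α, Disjoint F T → 0 ≤ φ F T)
    (hμrec : ∀ (J : Finset α) (hJ : 2 ≤ J.card),
      μ J = J.sup' (card_pos.mp (by omega)) (recursionTerm δ φ μ J))
    {a b : α} (hab : μ {b} ≤ μ {a}) {J : Finset α} (ha : a ∈ J) (hb : b ∈ J) :
    recursionTerm δ φ μ J b ≤ recursionTerm δ φ μ J a :=
  calc recursionTerm δ φ μ J b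
      ≤ recursionTerm δ φ (fun I => μ (swap a b • I)) J b :=
        recursionTerm_mono hδ1 hφpos fun I _ hbI _ =>
          le_swap_smul hsym hφdef hδ1 hφpos hμrec hab I fun _ => hbI
    _ = recursionTerm δ φ μ (swap a b • J) (swap a b • b) :=
        (recursionTerm_smul hsym hφdef μ _ J b).symm
    _ = recursionTerm δ φ μ J a := by
        rw [swap_smul_finset_eq_self (iff_of_true ha hb), Perm.smul_def, swap_apply_right]

end Recursion

/-- Lemma 1: for a symmetric, monotone erasure profile `δ` and decreasing positive
singleton lengths, the maximum in the recursive definition of `μ_J` is attained at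
`k = min J`; moreover `μ` is monotone under replacing the minimal element by a
smaller one. -/
theorem stmt9 (K : ℕ)
    (δ : Finset (Fin K) → ℝ)
    (hδ1 : ∀ A, δ A < 1)
    (hsym : ∀ A B : Finset (Fin K), A.card = B.card → δ A = δ B)
    (φ : Finset (Fin K) → Finset (Fin K) → ℝ)
    (hφdef : ∀ F T : Finset (Fin K),
      φ F T = ∑ U ∈ T.powerset, (-1 : ℝ) ^ U.card * δ (F ∪ U))
    (hφpos : ∀ F T : Finset (Fin K), Disjoint F T → 0 ≤ φ F T)
    (μ : Finset (Fin K) → ℝ)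
    (hμdec : ∀ k l : Fin K, k ≤ l → μ {l} ≤ μ {k})
    (hμrec : ∀ (J : Finset (Fin K)) (hJ : 2 ≤ J.card),
      μ J = J.sup' (Finset.card_pos.mp (by omega)) (fun k =>
        ∑ I ∈ J.powerset.filter (fun I => k ∈ I ∧ I ≠ J),
          φ (Jᶜ ∪ {k}) (J \ I) / (1 - δ (Jᶜ ∪ {k})) * μ I)) :
    (∀ (J : Finset (Fin K)) (hJ : 2 ≤ J.card),
      μ J = ∑ I ∈ J.powerset.filter
          (fun I => J.min' (Finset.card_pos.mp (by omega)) ∈ I ∧ I ≠ J),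
        φ (Jᶜ ∪ {J.min' (Finset.card_pos.mp (by omega))}) (J \ I) /
          (1 - δ (Jᶜ ∪ {J.min' (Finset.card_pos.mp (by omega))})) * μ I) ∧
    (∀ (J₁ J₂ : Finset (Fin K)) (h₁ : J₁.Nonempty) (h₂ : J₂.Nonempty),
      J₁.card = J₂.card →
      J₁.erase (J₁.min' h₁) = J₂.erase (J₂.min' h₂) →
      J₁.min' h₁ ≤ J₂.min' h₂ → μ J₂ ≤ μ J₁) := by
  have hrec : ∀ (J : Finset (Fin K)) (hJ : 2 ≤ J.card),
      μ J = J.sup' (card_pos.mp (by omega)) (recursionTerm δ φ μ J) := hμrec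
  refine ⟨fun J hJ => ?_, fun J₁ J₂ h₁ h₂ _ herase hmin => ?_⟩
  · have hne : J.Nonempty := card_pos.mp (by omega)
    show μ J = recursionTerm δ φ μ J (J.min' hne)
    rw [hrec J hJ]
    refine le_antisymm (sup'_le _ _ fun k hk => ?_) (le_sup' _ (min'_mem J hne))
    exact recursionTerm_le_of_singleton_le hsym hφdef hδ1 hφpos hrec
      (hμdec _ _ (min'_le J k hk)) (min'_mem J hne) hk
  · rw [eq_swap_smul_finset_of_erase_eq (min'_mem J₁ h₁) (min'_mem J₂ h₂) herase]
    exact le_swap_smul hsym hφdef hδ1 hφpos hrec (hμdec _ _ hmin) J₂ fun _ => min'_mem J₂ h₂
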